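/- arXiv:1805.04815 — 2 statements merged into one kernel-verified Lean document; each statement's English description precedes it below -/
import Mathlib

section
/- Let a ≤ b be reals with a ≤ 0 ≤ b, let v ∈ ℝ, and let M₁ ≥ 2·max(|a|,|b|)·|v| (with M₁ > 0). Then there exists u ∈ {0,1} such that ψ satisfies (−M₁·u + v·a ≤ ψ ≤ v·b + M₁·u) and (−M₁·(1−u) + v·b ≤ ψ ≤ v·a + M₁·(1−u)) if and only if ψ = v·c for some c with a ≤ c ≤ b. -/
/-!
If `v ≥ 0`, the choice `u = 0` makes the first pair read `v a ≤ ψ ≤ v b` and relaxes the second one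
by `M`; if `v ≤ 0`, the choice `u = 1` does the same with the roles of the pairs exchanged. Either
way the active pair places `ψ` in the segment between `v a` and `v b`, which is exactly the image
of `[a, b]` under `c ↦ v c`; conversely every `v c` satisfies the relaxed pair as soon as
`|v| (b - a) ≤ M`, which `M ≥ 2 max(|a|, |b|) |v|` guarantees.
-/

open Set

/-- The constraint pairs (6)–(7) and (10)–(11) of the paper, with the binary variable `u`. -/
def BigMConstraints (M a b v ψ u : ℝ) : Prop :=
  (-(M * u) + v * a ≤ ψ ∧ ψ ≤ v * b + M * u) ∧
    (-(M * (1 - u)) + v * b ≤ ψ ∧ ψ ≤ v * a + M * (1 - u))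

namespace BigMConstraints

variable {M a b v ψ c : ℝ}

lemma mem_uIcc {u : ℝ} (hu : u = 0 ∨ u = 1) (h : BigMConstraints M a b v ψ u) :
    ψ ∈ uIcc (v * a) (v * b) := by
  obtain ⟨⟨h₁, h₂⟩, h₃, h₄⟩ := h
  rcases hu with rfl | rfl
  · exact Icc_subset_uIcc ⟨by linarith, by linarith⟩
  · exact Icc_subset_uIcc' ⟨by linarith, by linarith⟩

lemma mul_of_nonneg (hv : 0 ≤ v) (hc : c ∈ Icc a b) (hM : v * (b - a) ≤ M) :
    BigMConstraints M a b v (v * c) 0 := by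
  obtain ⟨hac, hcb⟩ := hc
  refine ⟨⟨?_, ?_⟩, ?_, ?_⟩ <;> nlinarith

lemma mul_of_nonpos (hv : v ≤ 0) (hc : c ∈ Icc a b) (hM : -v * (b - a) ≤ M) :
    BigMConstraints M a b v (v * c) 1 := by
  obtain ⟨hac, hcb⟩ := hc
  refine ⟨⟨?_, ?_⟩, ?_, ?_⟩ <;> nlinarith

theorem exists_iff_mem_image (hab : a ≤ b) (hM : |v| * (b - a) ≤ M) :
    (∃ u : ℝ, (u = 0 ∨ u = 1) ∧ BigMConstraints M a b v ψ u) ↔ ψ ∈ (v * ·) '' Icc a b := by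
  constructor
  · rintro ⟨u, hu, h⟩
    rw [← uIcc_of_le hab, image_const_mul_uIcc]
    exact h.mem_uIcc hu
  · rintro ⟨c, hc, rfl⟩
    rcases le_total 0 v with hv | hv
    · exact ⟨0, .inl rfl, mul_of_nonneg hv hc (by rwa [abs_of_nonneg hv] at hM)⟩
    · exact ⟨1, .inr rfl, mul_of_nonpos hv hc (by rwa [abs_of_nonpos hv] at hM)⟩

end BigMConstraints

theorem stmt_2_general (a b v ψ M₁ : ℝ) (hab : a ≤ b)
    (hM₁ : 2 * max |a| |b| * |v| ≤ M₁) :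
    (∃ u : ℝ, (u = 0 ∨ u = 1) ∧
      (-(M₁ * u) + v * a ≤ ψ ∧ ψ ≤ v * b + M₁ * u) ∧
      (-(M₁ * (1 - u)) + v * b ≤ ψ ∧ ψ ≤ v * a + M₁ * (1 - u))) ↔
    (∃ c : ℝ, a ≤ c ∧ c ≤ b ∧ ψ = v * c) := by
  have hwidth : b - a ≤ 2 * max |a| |b| := by
    linarith [neg_le_abs a, le_abs_self b, le_max_left |a| |b|, le_max_right |a| |b|]
  have hM : |v| * (b - a) ≤ M₁ := by
    linarith [mul_le_mul_of_nonneg_left hwidth (abs_nonneg v)]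
  refine (BigMConstraints.exists_iff_mem_image hab hM).trans ?_
  simp only [mem_image, mem_Icc, and_assoc, eq_comm (a := ψ)]

theorem stmt_2 (a b v ψ M₁ : ℝ) (hab : a ≤ b) (ha : a ≤ 0) (hb : 0 ≤ b)
    (hM₁pos : 0 < M₁) (hM₁ : 2 * max |a| |b| * |v| ≤ M₁) :
    (∃ u : ℝ, (u = 0 ∨ u = 1) ∧
      (-(M₁ * u) + v * a ≤ ψ ∧ ψ ≤ v * b + M₁ * u) ∧
      (-(M₁ * (1 - u)) + v * b ≤ ψ ∧ ψ ≤ v * a + M₁ * (1 - u))) ↔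
    (∃ c : ℝ, a ≤ c ∧ c ≤ b ∧ ψ = v * c) :=
  stmt_2_general a b v ψ M₁ hab hM₁
end

section
/- If at some iteration of the column-and-constraint generation algorithm the realization z* produced by the subproblem already belongs to the enumerated set Z_q of the master problem, then the master problem value LB equals the upper bound UB, and the algorithm terminates with an optimal solution of the full problem. -/
theorem stmt_10_general {α ζ : Type*} (X : Set α) (f g : α → ℝ) (φ : ζ → ℝ)
    (Z Zq : Finset ζ) (hZq : Zq ⊆ Z)
    (xstar : α) (hx : xstar ∈ X)
    (hmfeas : ∀ z ∈ Zq, g xstar ≤ φ z)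
    (hmopt : ∀ x ∈ X, (∀ z ∈ Zq, g x ≤ φ z) → f xstar ≤ f x)
    (zstar : ζ)
    (hzmin : ∀ z ∈ Z, φ zstar ≤ φ z)
    (hrep : zstar ∈ Zq) :
    IsLeast {v : ℝ | ∃ x ∈ X, (∀ z ∈ Z, g x ≤ φ z) ∧ v = f x} (f xstar) := by
  have hfull_feas : ∀ z ∈ Z, g xstar ≤ φ z := fun z hz => (hmfeas zstar hrep).trans (hzmin z hz)
  refine ⟨⟨xstar, hx, hfull_feas, rfl⟩, ?_⟩
  rintro v ⟨x, hxX, hfeas, rfl⟩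
  exact hmopt x hxX fun z hz => hfeas z (hZq hz)

theorem stmt_10 {α ζ : Type*} (X : Set α) (f g : α → ℝ) (φ : ζ → ℝ)
    (Z Zq : Finset ζ) (hZq : Zq ⊆ Z)
    (xstar : α) (hx : xstar ∈ X)
    (hmfeas : ∀ z ∈ Zq, g xstar ≤ φ z)
    (hmopt : ∀ x ∈ X, (∀ z ∈ Zq, g x ≤ φ z) → f xstar ≤ f x)
    (zstar : ζ) (hzZ : zstar ∈ Z)
    (hzmin : ∀ z ∈ Z, φ zstar ≤ φ z)
    (hrep : zstar ∈ Zq) :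
    IsLeast {v : ℝ | ∃ x ∈ X, (∀ z ∈ Z, g x ≤ φ z) ∧ v = f x} (f xstar) :=
  stmt_10_general X f g φ Z Zq hZq xstar hx hmfeas hmopt zstar hzmin hrep
end
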